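/- arXiv:2202.13061 — 3 statements merged into one kernel-verified Lean document; each statement's English description precedes it below -/
import Mathlib

section
/- Let t ≥ 1 and let X₁, …, X_{t+1} be finite nonempty sets of sizes n₁, …, n_{t+1}. Then the average over all tuples (f₁, …, f_t), with f_s : X_s → X_{s+1}, of deg(f_t ∘ ⋯ ∘ f₁) equals (∏_{s=1}^{t+1} n_s − ∏_{s=1}^{t+1} (n_s − 1)) / ∏_{s=2}^{t+1} n_s. -/
open Finset

/-- The degree of noninvertibility of `f`. -/
noncomputable def deg {X Y : Type*} [Fintype X] [Fintype Y] [DecidableEq Y] (f : X → Y) : ℝ :=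
  (1 / (Fintype.card X : ℝ)) *
    ∑ y : Y, ((Finset.univ.filter (fun x => f x = y)).card : ℝ) ^ 2

/-- The composition `f_t ∘ ⋯ ∘ f₁ : X 0 → X t` of a chain of functions `f s : X s → X (s+1)`. -/
def chainComp {X : ℕ → Type*} : ∀ t : ℕ, (∀ s : Fin t, X s → X (s + 1)) → X 0 → X t
  | 0, _ => id
  | t + 1, f => fun x => f ⟨t, Nat.lt_succ_self t⟩ (chainComp t (fun s => f s.castSucc) x)

/-- Number of functions sending two fixed distinct points to the same value. -/
lemma card_eq_fiber {A B : Type*} [Fintype A] [DecidableEq A] [Fintype B] [DecidableEq B]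
    {u v : A} (huv : u ≠ v) :
    (univ.filter fun h : A → B => h u = h v).card = Fintype.card B ^ (Fintype.card A - 1) := by
  rw [← Fintype.card_subtype]
  have e : {h : A → B // h u = h v} ≃ ({a : A // a ≠ v} → B) :=
    { toFun := fun h a => h.1 a.1
      invFun := fun g => ⟨fun a => if ha : a = v then g ⟨u, huv⟩ else g ⟨a, ha⟩, by simp [huv]⟩
      left_inv := fun h => by
        ext a
        by_cases ha : a = v
        · subst ha; simpa using h.2
        · simp [ha]
      right_inv := fun g => by
        ext a
        simp [a.2] }
  rw [Fintype.card_congr e, Fintype.card_fun]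
  congr 1
  have : Fintype.card {a : A // a ≠ v} = Fintype.card A - Fintype.card {a : A // a = v} :=
    Fintype.card_subtype_compl _
  rw [this, Fintype.card_subtype_eq]

lemma card_ne_fiber {A B : Type*} [Fintype A] [DecidableEq A] [Fintype B] [DecidableEq B]
    {u v : A} (huv : u ≠ v) :
    (univ.filter fun h : A → B => h u ≠ h v).card
      = (Fintype.card B - 1) * Fintype.card B ^ (Fintype.card A - 1) := by
  have htot := card_filter_add_card_filter_not (s := (univ : Finset (A → B)))
    (p := fun h : A → B => h u = h v)
  rw [card_eq_fiber huv, card_univ, Fintype.card_fun] at htot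
  have : Nonempty A := ⟨u⟩
  have hA : Fintype.card A - 1 + 1 = Fintype.card A :=
    Nat.succ_pred_eq_of_pos Fintype.card_pos
  have hcard : (univ.filter fun h : A → B => h u ≠ h v).card
      = Fintype.card B ^ Fintype.card A - Fintype.card B ^ (Fintype.card A - 1) := by
    simp only [ne_eq] at htot ⊢
    exact Nat.eq_sub_of_add_eq' htot
  have hp : Fintype.card B * Fintype.card B ^ (Fintype.card A - 1)
      = Fintype.card B ^ Fintype.card A := by
    rw [Nat.mul_comm, ← pow_succ, hA]
  rw [hcard, ← hp, Nat.sub_mul, one_mul]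

lemma chain_snoc {X : ℕ → Type*} (t : ℕ) (g : ∀ s : Fin t, X s → X (s+1))
    (h : X t → X (t+1)) (y : X 0) :
    chainComp (t+1) (Fin.snocEquiv (fun i : Fin (t+1) => X i → X (i+1)) (h, g)) y
      = h (chainComp t g y) := by
  show (Fin.snoc g h : ∀ i : Fin (t+1), X i → X (i+1)) (Fin.last t)
      (chainComp t (fun s => (Fin.snoc g h : ∀ i : Fin (t+1), X i → X (i+1)) s.castSucc) y) = _
  rw [Fin.snoc_last]
  congr 1
  congr 1
  funext s
  exact Fin.snoc_castSucc ..

lemma chain_ne_count (X : ℕ → Type*) [∀ s, Fintype (X s)] [∀ s, DecidableEq (X s)]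
    [∀ s, Nonempty (X s)] (t : ℕ) (x x' : X 0) (hxx' : x ≠ x') :
    (univ.filter fun f : ∀ s : Fin t, X s → X (s+1) =>
        chainComp t f x ≠ chainComp t f x').card
      = ∏ s ∈ range t,
          ((Fintype.card (X (s+1)) - 1) * Fintype.card (X (s+1)) ^ (Fintype.card (X s) - 1)) := by
  induction t with
  | zero =>
    have : (univ.filter fun f : ∀ s : Fin 0, X s → X (s+1) =>
        chainComp 0 f x ≠ chainComp 0 f x') = univ := filter_true_of_mem (fun f _ => hxx')
    rw [this]
    simp
  | succ t ih =>
    classical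
    rw [card_filter, ← Equiv.sum_comp (Fin.snocEquiv (fun i : Fin (t+1) => X i → X (i+1)))
      (fun f => if chainComp (t+1) f x ≠ chainComp (t+1) f x' then 1 else 0)]
    show (∑ p : (X t → X (t+1)) × (∀ s : Fin t, X s → X (s+1)),
        if chainComp (t+1) (Fin.snocEquiv (fun i : Fin (t+1) => X i → X (i+1)) p) x
          ≠ chainComp (t+1) (Fin.snocEquiv (fun i : Fin (t+1) => X i → X (i+1)) p) x'
        then 1 else 0) = _
    rw [Fintype.sum_prod_type_right]
    have step : ∀ g : ∀ s : Fin t, X s → X (s+1),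
        (∑ h : X t → X (t+1),
          if chainComp (t+1) (Fin.snocEquiv (fun i : Fin (t+1) => X i → X (i+1)) (h, g)) x
            ≠ chainComp (t+1) (Fin.snocEquiv (fun i : Fin (t+1) => X i → X (i+1)) (h, g)) x'
          then 1 else 0)
        = if chainComp t g x ≠ chainComp t g x' then
            (Fintype.card (X (t+1)) - 1) * Fintype.card (X (t+1)) ^ (Fintype.card (X t) - 1)
          else 0 := by
      intro g
      simp only [chain_snoc]
      by_cases hgg : chainComp t g x = chainComp t g x'
      · simp [hgg]
      · rw [if_pos hgg, ← card_ne_fiber hgg, card_filter]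
    rw [Finset.sum_congr rfl (fun g _ => step g), Finset.sum_ite, Finset.sum_const,
      Finset.sum_const_zero, add_zero, smul_eq_mul, ih, prod_range_succ, Nat.mul_comm]

lemma sum_sq_fibers {A B : Type*} [Fintype A] [Fintype B] [DecidableEq B] (g : A → B) :
    ∑ y : B, ((univ.filter fun x => g x = y).card : ℝ) ^ 2
      = ∑ x : A, ∑ x' : A, (if g x = g x' then (1:ℝ) else 0) := by
  classical
  have hfib : ∀ y : B, ((univ.filter fun x => g x = y).card : ℝ)
      = ∑ x : A, (if g x = y then (1:ℝ) else 0) := by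
    intro y
    rw [card_filter]
    push_cast
    exact Finset.sum_congr rfl (fun x _ => by split <;> simp)
  calc ∑ y : B, ((univ.filter fun x => g x = y).card : ℝ) ^ 2
      = ∑ y : B, ∑ x : A, ∑ x' : A,
          (if g x = y then (1:ℝ) else 0) * (if g x' = y then (1:ℝ) else 0) := by
        refine Finset.sum_congr rfl (fun y _ => ?_)
        rw [hfib, sq, Finset.sum_mul_sum]
    _ = ∑ x : A, ∑ x' : A, ∑ y : B,
          (if g x = y then (1:ℝ) else 0) * (if g x' = y then (1:ℝ) else 0) := by
        rw [Finset.sum_comm]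
        exact Finset.sum_congr rfl (fun x _ => Finset.sum_comm)
    _ = ∑ x : A, ∑ x' : A, (if g x = g x' then (1:ℝ) else 0) := by
        refine Finset.sum_congr rfl fun x _ => Finset.sum_congr rfl fun x' _ => ?_
        simp only [ite_mul, one_mul, zero_mul]
        rw [Finset.sum_ite_eq univ (g x) (fun y => if g x' = y then (1:ℝ) else 0)]
        simp [eq_comm]

theorem average_deg_chain (t : ℕ) (ht : 1 ≤ t) (X : ℕ → Type*)
    [∀ s, Fintype (X s)] [∀ s, DecidableEq (X s)] [∀ s, Nonempty (X s)]
    (n : ℕ → ℕ) (hn : ∀ s, Fintype.card (X s) = n s) :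
    (∑ f : ∀ s : Fin t, X s → X (s + 1), deg (chainComp t f)) /
        (∏ s ∈ Finset.range t, ((n (s + 1) : ℝ)) ^ (n s)) =
      ((∏ s ∈ Finset.range (t + 1), (n s : ℝ)) -
          ∏ s ∈ Finset.range (t + 1), ((n s : ℝ) - 1)) /
        ∏ s ∈ Finset.range t, (n (s + 1) : ℝ) := by
  classical
  have hpos : ∀ s, 0 < n s := fun s => hn s ▸ Fintype.card_pos
  set Nn : ℕ := ∏ s ∈ range t, n (s+1) ^ n s with hNn
  set Dn : ℕ := ∏ s ∈ range t, ((n (s+1) - 1) * n (s+1) ^ (n s - 1)) with hDn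
  have hcardPi : Fintype.card (∀ s : Fin t, X s → X (s+1)) = Nn := by
    rw [Fintype.card_pi, hNn, ← Fin.prod_univ_eq_prod_range (fun s => n (s+1) ^ n s) t]
    exact Finset.prod_congr rfl fun s _ => by rw [Fintype.card_fun, hn, hn]
  have hNe : ∀ x x' : X 0, x ≠ x' →
      (univ.filter fun f : ∀ s : Fin t, X s → X (s+1) =>
        chainComp t f x ≠ chainComp t f x').card = Dn := by
    intro x x' h
    rw [chain_ne_count X t x x' h, hDn]
    exact Finset.prod_congr rfl fun s _ => by rw [hn, hn]
  -- the inner sum over tuples, for a fixed pair of points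
  have hinner : ∀ x x' : X 0,
      (∑ f : ∀ s : Fin t, X s → X (s+1),
        if chainComp t f x = chainComp t f x' then (1:ℝ) else 0)
      = if x = x' then (Nn:ℝ) else (Nn:ℝ) - (Dn:ℝ) := by
    intro x x'
    by_cases hxx : x = x'
    · subst hxx
      rw [if_pos rfl, Finset.sum_congr rfl (fun f _ => if_pos rfl), Finset.sum_const,
        card_univ, hcardPi, nsmul_eq_mul, mul_one]
    · rw [if_neg hxx, Finset.sum_boole]
      have htot := card_filter_add_card_filter_not
        (s := (univ : Finset (∀ s : Fin t, X s → X (s+1))))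
        (p := fun f => chainComp t f x = chainComp t f x')
      rw [card_univ, hcardPi] at htot
      have hne := hNe x x' hxx
      simp only [ne_eq] at hne htot
      rw [hne] at htot
      have hle : Dn ≤ Nn := Nat.le.intro ((Nat.add_comm _ _).trans htot)
      rw [Nat.eq_sub_of_add_eq htot, Nat.cast_sub hle]
  have hdeg : ∀ f : ∀ s : Fin t, X s → X (s+1),
      deg (chainComp t f) = (1 / (n 0 : ℝ)) *
        ∑ x : X 0, ∑ x' : X 0, (if chainComp t f x = chainComp t f x' then (1:ℝ) else 0) := by
    intro f
    rw [deg, hn 0, sum_sq_fibers]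
  have hsum : (∑ f : ∀ s : Fin t, X s → X (s+1), deg (chainComp t f))
      = (1 / (n 0:ℝ)) * ∑ x : X 0, ∑ x' : X 0,
          (if x = x' then (Nn:ℝ) else (Nn:ℝ) - (Dn:ℝ)) := by
    rw [Finset.sum_congr rfl fun f _ => hdeg f, ← Finset.mul_sum]
    congr 1
    rw [Finset.sum_comm]
    refine Finset.sum_congr rfl fun x _ => ?_
    rw [Finset.sum_comm]
    exact Finset.sum_congr rfl fun x' _ => hinner x x'
  have hrow : ∀ x : X 0, (∑ x' : X 0, (if x = x' then (Nn:ℝ) else (Nn:ℝ) - (Dn:ℝ)))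
      = (n 0:ℝ) * ((Nn:ℝ) - (Dn:ℝ)) + (Dn:ℝ) := by
    intro x
    have hsplit : ∀ x' : X 0, (if x = x' then (Nn:ℝ) else (Nn:ℝ) - (Dn:ℝ))
        = ((Nn:ℝ) - (Dn:ℝ)) + (if x = x' then (Dn:ℝ) else 0) := by
      intro x'; split <;> ring
    rw [Finset.sum_congr rfl fun x' _ => hsplit x', Finset.sum_add_distrib,
      Finset.sum_const, Finset.sum_ite_eq univ x (fun _ => (Dn:ℝ)), if_pos (mem_univ x),
      card_univ, hn 0, nsmul_eq_mul]
  have hdouble : (∑ x : X 0, ∑ x' : X 0, (if x = x' then (Nn:ℝ) else (Nn:ℝ) - (Dn:ℝ)))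
      = (n 0 : ℝ) * ((n 0:ℝ) * ((Nn:ℝ) - (Dn:ℝ)) + (Dn:ℝ)) := by
    rw [Finset.sum_congr rfl fun x _ => hrow x, Finset.sum_const, card_univ, hn 0, nsmul_eq_mul]
  have hn0 : (n 0:ℝ) ≠ 0 := Nat.cast_ne_zero.mpr (hpos 0).ne'
  have hNcast : ((Nn:ℕ) : ℝ) = ∏ s ∈ range t, ((n (s+1):ℝ)) ^ (n s) := by
    rw [hNn]; push_cast; rfl
  have hDcast : ((Dn:ℕ) : ℝ) = ∏ s ∈ range t, (((n (s+1):ℝ) - 1) * (n (s+1):ℝ) ^ (n s - 1)) := by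
    rw [hDn, Nat.cast_prod]
    refine Finset.prod_congr rfl fun s _ => ?_
    rw [Nat.cast_mul, Nat.cast_pow, Nat.cast_sub (hpos (s+1))]
    norm_num
  have hR0 : (∏ s ∈ range t, (n (s+1):ℝ)) ≠ 0 :=
    Finset.prod_ne_zero_iff.mpr fun s _ => Nat.cast_ne_zero.mpr (hpos (s+1)).ne'
  have hNr0 : (∏ s ∈ range t, ((n (s+1):ℝ)) ^ (n s)) ≠ 0 :=
    Finset.prod_ne_zero_iff.mpr fun s _ =>
      pow_ne_zero _ (Nat.cast_ne_zero.mpr (hpos (s+1)).ne')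
  have hDR : (∏ s ∈ range t, (((n (s+1):ℝ) - 1) * (n (s+1):ℝ) ^ (n s - 1)))
        * (∏ s ∈ range t, (n (s+1):ℝ))
      = (∏ s ∈ range t, ((n (s+1):ℝ) - 1)) * (∏ s ∈ range t, ((n (s+1):ℝ)) ^ (n s)) := by
    rw [← Finset.prod_mul_distrib, ← Finset.prod_mul_distrib]
    refine Finset.prod_congr rfl fun s _ => ?_
    have hk : n s - 1 + 1 = n s := Nat.succ_pred_eq_of_pos (hpos s)
    rw [mul_assoc, ← pow_succ, hk]
  rw [hsum, hdouble, one_div, inv_mul_cancel_left₀ hn0, hNcast, hDcast,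
    div_eq_div_iff hNr0 hR0, Finset.prod_range_succ' (fun s => ((n s:ℝ))) t,
    Finset.prod_range_succ' (fun s => ((n s:ℝ) - 1)) t]
  linear_combination (1 - (n 0:ℝ)) * hDR
end

section
/- For all n ≥ 1 and q ≥ 1: Σ over tuples (k₁,…,k_m) of nonnegative integers summing to n of C(n; k₁,…,k_m) · (Σ_{i=1}^m k_i^q) = n · m^{n−(q−1)} · Σ_{k=1}^{q} S(q,k) · (Σ_{j=1}^{k} (−1)^{k−j} s(k,j) n^{j−1}) · m^{q−k}, for every m ≥ 1. -/
open Finset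

/-- Stirling numbers of the second kind. -/
def stirling2 : ℕ → ℕ → ℕ
  | 0, 0 => 1
  | 0, _ + 1 => 0
  | _ + 1, 0 => 0
  | n + 1, k + 1 => (k + 1) * stirling2 n (k + 1) + stirling2 n k

/-- Unsigned Stirling numbers of the first kind. -/
def stirling1 : ℕ → ℕ → ℕ
  | 0, 0 => 1
  | 0, _ + 1 => 0
  | _ + 1, 0 => 0
  | n + 1, k + 1 => n * stirling1 n (k + 1) + stirling1 n k

/-!
Writing `k_i ^ q = ∑_r S(q, r) (k_i)_r` with falling factorials reduces the left-hand side to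
the factorial moments `∑_k C(n; k) (k_i)_r`. These are the `r`-th derivative at `t = 1` of
`∑_k C(n; k) t ^ k_i = (t + m - 1) ^ n`, i.e. `(n)_r m ^ (n - r)`. On the right-hand side the
signed Stirling numbers of the first kind are the coefficients of the falling factorial, so
`n * ∑_j (-1) ^ (k - j) s(k, j) n ^ (j - 1) = (n)_k`, and the two sides agree term by term.
-/

open Polynomial

theorem stirling1_eq_stirlingFirst : stirling1 = Nat.stirlingFirst := by
  funext n k
  induction n generalizing k with
  | zero => cases k <;> rfl
  | succ n ih => cases k <;> simp [stirling1, Nat.stirlingFirst, ih]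

theorem stirling2_eq_stirlingSecond : stirling2 = Nat.stirlingSecond := by
  funext n k
  induction n generalizing k with
  | zero => cases k <;> rfl
  | succ n ih => cases k <;> simp [stirling2, Nat.stirlingSecond, ih]

theorem coeff_ascPochhammer_nat (k j : ℕ) :
    (ascPochhammer ℕ k).coeff j = Nat.stirlingFirst k j := by
  induction k generalizing j with
  | zero => cases j <;> simp [coeff_one]
  | succ k ih =>
    rw [ascPochhammer_succ_right, mul_add, coeff_add, ← C_eq_natCast, coeff_mul_C, ih]
    cases j with
    | zero => cases k <;> simp
    | succ j =>
      rw [coeff_mul_X, ih, Nat.stirlingFirst_succ_succ, Nat.cast_id, add_comm, mul_comm]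

theorem ascPochhammer_eval_eq_sum_stirlingFirst {R : Type*} [CommSemiring R] (k : ℕ) (x : R) :
    (ascPochhammer R k).eval x = ∑ j ∈ range (k + 1), (Nat.stirlingFirst k j : R) * x ^ j := by
  rw [← ascPochhammer_map (Nat.castRingHom R), eval_map, eval₂_eq_sum_range,
    ascPochhammer_natDegree]
  simp [coeff_ascPochhammer_nat]

theorem descPochhammer_eval_eq_sum_stirlingFirst {R : Type*} [CommRing R] (k : ℕ) (x : R) :
    (descPochhammer R k).eval x =
      ∑ j ∈ range (k + 1), (-1) ^ (k - j) * (Nat.stirlingFirst k j : R) * x ^ j := by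
  have h := ascPochhammer_eval_neg_eq_descPochhammer R x k
  rw [ascPochhammer_eval_eq_sum_stirlingFirst] at h
  calc (descPochhammer R k).eval x = (-1) ^ k * ((-1) ^ k * (descPochhammer R k).eval x) := by
        rw [← mul_assoc, ← mul_pow, neg_one_mul, neg_neg, one_pow, one_mul]
    _ = _ := by
      rw [← h, mul_sum]
      refine sum_congr rfl fun j hj => ?_
      obtain ⟨i, rfl⟩ := Nat.exists_eq_add_of_le (Nat.lt_succ_iff.mp (mem_range.mp hj))
      have hsq : ((-1 : R) ^ j) * (-1) ^ j = 1 := by rw [← mul_pow]; norm_num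
      rw [neg_pow, Nat.add_sub_cancel_left, pow_add]
      linear_combination ((Nat.stirlingFirst (j + i) j : R) * x ^ j * (-1) ^ i) * hsq

theorem pow_eq_sum_stirlingSecond_mul_descPochhammer_eval {R : Type*} [CommRing R] (x : R)
    (q : ℕ) :
    x ^ q =
      ∑ r ∈ range (q + 1), (Nat.stirlingSecond q r : R) * (descPochhammer R r).eval x := by
  induction q with
  | zero => simp
  | succ q ih =>
    set P : ℕ → R := fun r => (descPochhammer R r).eval x
    -- both sides are `∑ r ∈ range (q + 2), r * S(q, r) * P r`, as `S(q, q + 1) = 0`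
    have hshift : ∑ r ∈ range (q + 1), (r : R) * Nat.stirlingSecond q r * P r =
        ∑ r ∈ range (q + 1),
          ((r + 1 : ℕ) : R) * Nat.stirlingSecond q (r + 1) * P (r + 1) := by
      have htop : (Nat.stirlingSecond q (q + 1) : R) = 0 := by
        rw [Nat.stirlingSecond_eq_zero_of_lt (Nat.lt_succ_self q), Nat.cast_zero]
      have h1 := sum_range_succ' (fun r => (r : R) * Nat.stirlingSecond q r * P r) (q + 1)
      have h2 := sum_range_succ (fun r => (r : R) * Nat.stirlingSecond q r * P r) (q + 1)
      simp only [htop, Nat.cast_zero, zero_mul, mul_zero, add_zero] at h1 h2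
      rw [← h2, h1]
    calc x ^ (q + 1)
        = ∑ r ∈ range (q + 1), (Nat.stirlingSecond q r : R) * (P (r + 1) + r * P r) := by
          rw [pow_succ, ih, sum_mul]
          refine sum_congr rfl fun r _ => ?_
          simp only [P, descPochhammer_succ_eval]
          ring
      _ = ∑ r ∈ range (q + 1), (Nat.stirlingSecond q r : R) * P (r + 1) +
            ∑ r ∈ range (q + 1), (r : R) * Nat.stirlingSecond q r * P r := by
          rw [← sum_add_distrib]
          exact sum_congr rfl fun r _ => by ring
      _ = ∑ r ∈ range (q + 1), (Nat.stirlingSecond (q + 1) (r + 1) : R) * P (r + 1) := by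
          rw [hshift, ← sum_add_distrib]
          refine sum_congr rfl fun r _ => ?_
          rw [Nat.stirlingSecond_succ_succ]
          push_cast
          ring
      _ = _ := by simp [sum_range_succ' _ (q + 1), P]

theorem sum_multinomial_mul_X_pow {ι : Type*} [Fintype ι] [DecidableEq ι] (n : ℕ) (i : ι) :
    ∑ k ∈ piAntidiag univ n, (Nat.multinomial univ k : ℕ[X]) * X ^ k i =
      (X + C (Fintype.card ι - 1)) ^ n := by
  have hsum : ∑ j, (if j = i then (X : ℕ[X]) else 1) = X + C (Fintype.card ι - 1) := by
    rw [Fintype.sum_eq_add_sum_compl i, if_pos rfl,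
      sum_congr rfl fun j hj => if_neg (by simpa using hj)]
    simp [card_compl]
  have hprod (k : ι → ℕ) : ∏ j, (if j = i then (X : ℕ[X]) else 1) ^ k j = X ^ k i :=
    (Fintype.prod_eq_single i fun j hj => by simp [hj]).trans (by simp)
  simp_rw [← hsum, sum_pow_eq_sum_piAntidiag, hprod]

theorem sum_multinomial_mul_descFactorial {ι : Type*} [Fintype ι] [DecidableEq ι] (n r : ℕ)
    (i : ι) : ∑ k ∈ piAntidiag univ n, Nat.multinomial univ k * (k i).descFactorial r =
      n.descFactorial r * Fintype.card ι ^ (n - r) := by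
  have h := congrArg (fun p => (derivative^[r] p).eval 1) (sum_multinomial_mul_X_pow n i)
  simp only [iterate_derivative_sum, iterate_derivative_natCast_mul,
    iterate_derivative_X_pow_eq_smul, iterate_derivative_X_add_pow] at h
  have hcard : 1 + (Fintype.card ι - 1) = Fintype.card ι :=
    Nat.add_sub_of_le (Fintype.card_pos_iff.mpr ⟨i⟩)
  simpa [eval_finsetSum, hcard] using h

theorem sum_Icc_one_eq_sum_range_succ {M : Type*} [AddCommMonoid M] {f : ℕ → M} (h : f 0 = 0)
    (k : ℕ) : ∑ j ∈ Icc 1 k, f j = ∑ j ∈ range (k + 1), f j := by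
  rw [range_eq_Ico, sum_eq_sum_Ico_succ_bot (Nat.succ_pos k), h, zero_add]
  rfl

theorem mul_sum_Icc_stirlingFirst_eq_descPochhammer_eval {R : Type*} [CommRing R] {k : ℕ}
    (hk : 1 ≤ k) (x : R) :
    x * ∑ j ∈ Icc 1 k, (-1) ^ (k - j) * (Nat.stirlingFirst k j : R) * x ^ (j - 1) =
      (descPochhammer R k).eval x := by
  obtain ⟨k, rfl⟩ := Nat.exists_eq_add_of_le' hk
  rw [descPochhammer_eval_eq_sum_stirlingFirst, mul_sum,
    ← sum_Icc_one_eq_sum_range_succ (by simp)]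
  refine sum_congr rfl fun j hj => ?_
  obtain ⟨j, rfl⟩ := Nat.exists_eq_add_of_le' (mem_Icc.mp hj).1
  rw [Nat.add_sub_cancel, pow_succ]
  ring

theorem sum_multinomial_mul_pow {R : Type*} [CommRing R] {ι : Type*} [Fintype ι] [DecidableEq ι]
    (n q : ℕ) (i : ι) :
    ∑ k ∈ piAntidiag univ n, (Nat.multinomial univ k : R) * (k i : R) ^ q =
      ∑ r ∈ range (q + 1),
        (Nat.stirlingSecond q r : R) * n.descFactorial r * Fintype.card ι ^ (n - r) := by
  simp_rw [pow_eq_sum_stirlingSecond_mul_descPochhammer_eval (_ : R) q,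
    descPochhammer_eval_eq_descFactorial, mul_sum]
  rw [sum_comm]
  refine sum_congr rfl fun r _ => ?_
  have h := congrArg (Nat.cast : ℕ → R) (sum_multinomial_mul_descFactorial n r i)
  push_cast at h
  rw [mul_assoc, ← h, mul_sum]
  exact sum_congr rfl fun k _ => by ring

theorem sum_multinomial_mul_sum_pow {R : Type*} [CommRing R] {ι : Type*} [Fintype ι]
    [DecidableEq ι] (n q : ℕ) :
    ∑ k ∈ piAntidiag (univ : Finset ι) n, (Nat.multinomial univ k : R) * ∑ i, (k i : R) ^ q =
      Fintype.card ι * ∑ r ∈ range (q + 1),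
        (Nat.stirlingSecond q r : R) * n.descFactorial r * Fintype.card ι ^ (n - r) := by
  simp_rw [mul_sum]
  rw [sum_comm, sum_congr rfl fun i _ => sum_multinomial_mul_pow n q i, sum_const,
    Finset.card_univ, nsmul_eq_mul, mul_sum]

theorem mul_descFactorial_mul_pow_sub_eq_zpow {K : Type*} [Field K] (x : K) {n q r : ℕ}
    (hr : r ≤ q) :
    x * ((n.descFactorial r : K) * x ^ (n - r)) =
      n.descFactorial r * (x ^ ((n : ℤ) - ((q : ℤ) - 1)) * x ^ (q - r)) := by
  rcases lt_or_ge n r with hnr | hrn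
  · simp [Nat.descFactorial_eq_zero_iff_lt.mpr hnr]
  -- `zpow_add'` needs no `x ≠ 0`: the total exponent `n - r + 1` is nonzero
  have hexp : (n : ℤ) - ((q : ℤ) - 1) + ((q - r : ℕ) : ℤ) = ((n - r + 1 : ℕ) : ℤ) := by
    omega
  rw [← zpow_natCast x (q - r), ← zpow_add' (Or.inr (Or.inl (by omega))), hexp, zpow_natCast,
    pow_succ]
  ring

theorem antidiagonalTuple_eq_piAntidiag (m n : ℕ) :
    Finset.Nat.antidiagonalTuple m n = piAntidiag univ n := by
  ext f
  simp [Finset.Nat.mem_antidiagonalTuple, mem_piAntidiag]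

theorem multinomial_power_sum_general (n q m : ℕ) (hq : 1 ≤ q) :
    ∑ k ∈ Finset.Nat.antidiagonalTuple m n,
        ((Nat.multinomial Finset.univ k : ℝ) * ∑ i, ((k i : ℝ)) ^ q) =
      (n : ℝ) * (m : ℝ) ^ ((n : ℤ) - ((q : ℤ) - 1)) *
        ∑ k ∈ Finset.Icc 1 q, (stirling2 q k : ℝ) *
          (∑ j ∈ Finset.Icc 1 k, (-1 : ℝ) ^ (k - j) * (stirling1 k j : ℝ) * (n : ℝ) ^ (j - 1)) *
          (m : ℝ) ^ (q - k) := by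
  have hS0 : Nat.stirlingSecond q 0 = 0 := by
    obtain ⟨q, rfl⟩ := Nat.exists_eq_add_of_le' hq
    rfl
  rw [antidiagonalTuple_eq_piAntidiag, sum_multinomial_mul_sum_pow, Fintype.card_fin,
    stirling1_eq_stirlingFirst, stirling2_eq_stirlingSecond, mul_sum, mul_sum,
    ← sum_Icc_one_eq_sum_range_succ (by simp [hS0])]
  refine sum_congr rfl fun k hk => ?_
  obtain ⟨hk1, hkq⟩ := mem_Icc.mp hk
  have hinner := mul_sum_Icc_stirlingFirst_eq_descPochhammer_eval hk1 (n : ℝ)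
  rw [descPochhammer_eval_eq_descFactorial] at hinner
  have hpow := mul_descFactorial_mul_pow_sub_eq_zpow (m : ℝ) (n := n) hkq
  linear_combination (Nat.stirlingSecond q k : ℝ) * hpow -
    (Nat.stirlingSecond q k * (m : ℝ) ^ ((n : ℤ) - ((q : ℤ) - 1)) * (m : ℝ) ^ (q - k)) *
      hinner

theorem multinomial_power_sum (n q m : ℕ) (hn : 1 ≤ n) (hq : 1 ≤ q) (hm : 1 ≤ m) :
    ∑ k ∈ Finset.Nat.antidiagonalTuple m n,
        ((Nat.multinomial Finset.univ k : ℝ) * ∑ i, ((k i : ℝ)) ^ q) =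
      (n : ℝ) * (m : ℝ) ^ ((n : ℤ) - ((q : ℤ) - 1)) *
        ∑ k ∈ Finset.Icc 1 q, (stirling2 q k : ℝ) *
          (∑ j ∈ Finset.Icc 1 k, (-1 : ℝ) ^ (k - j) * (stirling1 k j : ℝ) * (n : ℝ) ^ (j - 1)) *
          (m : ℝ) ^ (q - k) :=
  multinomial_power_sum_general n q m hq
end

section
/- For all n, q ≥ 1: Σ over tuples (k₁,…,k_n) of nonnegative integers summing to n of C(n; k₁,…,k_n) · (Σ_{i=1}^n k_i^q) = n^{n−(q−2)} · Σ_{k=0}^{q−1} (−1)^k · (Σ_{j=1}^{q−k} S(q, k+j) · s(k+j, j)) · n^{q−k−1}. -/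
open Finset

lemma stirling2_zero (q : ℕ) : stirling2 (q+1) 0 = 0 := rfl
lemma stirling1_zero (q : ℕ) : stirling1 (q+1) 0 = 0 := rfl

lemma stirling2_eq_zero : ∀ {q m : ℕ}, q < m → stirling2 q m = 0
  | 0, 0, h => absurd h (by omega)
  | 0, m + 1, _ => rfl
  | q + 1, 0, h => absurd h (by omega)
  | q + 1, m + 1, h => by
    show (m + 1) * stirling2 q (m + 1) + stirling2 q m = 0
    rw [stirling2_eq_zero (by omega), stirling2_eq_zero (by omega)]; simp

lemma stirling1_eq_zero : ∀ {q m : ℕ}, q < m → stirling1 q m = 0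
  | 0, 0, h => absurd h (by omega)
  | 0, m + 1, _ => rfl
  | q + 1, 0, h => absurd h (by omega)
  | q + 1, m + 1, h => by
    show q * stirling1 q (m + 1) + stirling1 q m = 0
    rw [stirling1_eq_zero (by omega), stirling1_eq_zero (by omega)]; simp

lemma cast_mul_descFactorial (k m : ℕ) :
    (k : ℝ) * (k.descFactorial m : ℝ) =
      (k.descFactorial (m + 1) : ℝ) + m * (k.descFactorial m : ℝ) := by
  rcases le_or_gt (m + 1) k with h | h
  · rw [Nat.descFactorial_succ]
    push_cast [Nat.cast_sub (by omega : m ≤ k)]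
    ring
  · rcases le_or_gt m k with h2 | h2
    · have hk : k = m := by omega
      subst hk
      rw [Nat.descFactorial_succ]
      simp
    · rw [Nat.descFactorial_eq_zero_iff_lt.2 h2,
        Nat.descFactorial_eq_zero_iff_lt.2 (by omega)]
      push_cast; ring

lemma pow_eq_sum_stirling2 (k : ℕ) : ∀ q : ℕ, (k : ℝ) ^ q =
    ∑ m ∈ Finset.range (q + 1), (stirling2 q m : ℝ) * (k.descFactorial m : ℝ)
  | 0 => by simp [stirling2]
  | q + 1 => by
    rw [pow_succ, pow_eq_sum_stirling2 k q, Finset.sum_mul]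
    have h1 : ∀ m ∈ Finset.range (q + 1),
        (stirling2 q m : ℝ) * (k.descFactorial m : ℝ) * (k : ℝ)
          = (stirling2 q m : ℝ) * (k.descFactorial (m+1) : ℝ)
            + (m : ℝ) * (stirling2 q m : ℝ) * (k.descFactorial m : ℝ) := by
      intro m _
      have := cast_mul_descFactorial k m
      nlinarith [this]
    rw [Finset.sum_congr rfl h1, Finset.sum_add_distrib]
    have hB : ∑ m ∈ Finset.range (q + 1),
        (m : ℝ) * (stirling2 q m : ℝ) * (k.descFactorial m : ℝ)
        = ∑ m ∈ Finset.range (q + 1),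
          ((m+1 : ℕ) : ℝ) * (stirling2 q (m+1) : ℝ) * (k.descFactorial (m+1) : ℝ) := by
      rw [Finset.sum_range_succ' (fun m => (m : ℝ) * (stirling2 q m : ℝ) * (k.descFactorial m : ℝ)) q,
        Finset.sum_range_succ (fun m => ((m+1:ℕ) : ℝ) * (stirling2 q (m+1) : ℝ) * (k.descFactorial (m+1) : ℝ)) q,
        stirling2_eq_zero (show q < q+1 by omega)]
      simp
    rw [hB, ← Finset.sum_add_distrib]
    rw [Finset.sum_range_succ' (fun m => (stirling2 (q+1) m : ℝ) * (k.descFactorial m : ℝ)) (q+1)]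
    have h0 : (stirling2 (q+1) 0 : ℝ) * (Nat.descFactorial k 0 : ℝ) = 0 := by
      show ((0 : ℕ) : ℝ) * _ = 0; simp
    rw [h0, add_zero]
    apply Finset.sum_congr rfl
    intro m _
    show _ = (((m + 1) * stirling2 q (m + 1) + stirling2 q m : ℕ) : ℝ) * _
    push_cast
    ring

lemma prod_eq_sum_stirling1 (x : ℝ) : ∀ m : ℕ, ∏ i ∈ Finset.range m, (x + i) =
    ∑ j ∈ Finset.range (m + 1), (stirling1 m j : ℝ) * x ^ j
  | 0 => by simp [stirling1]
  | m + 1 => by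
    rw [Finset.prod_range_succ, prod_eq_sum_stirling1 x m, Finset.sum_mul]
    have h1 : ∀ j ∈ Finset.range (m + 1),
        (stirling1 m j : ℝ) * x ^ j * (x + m)
          = (stirling1 m j : ℝ) * x ^ (j + 1) + (m : ℝ) * (stirling1 m j : ℝ) * x ^ j := by
      intro j _; ring
    rw [Finset.sum_congr rfl h1, Finset.sum_add_distrib]
    have hB : ∑ j ∈ Finset.range (m + 1), (m : ℝ) * (stirling1 m j : ℝ) * x ^ j
        = ∑ j ∈ Finset.range (m + 1),
          (m : ℝ) * (stirling1 m (j + 1) : ℝ) * x ^ (j + 1) := by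
      rw [Finset.sum_range_succ' (fun j => (m : ℝ) * (stirling1 m j : ℝ) * x ^ j) m,
        Finset.sum_range_succ (fun j => (m : ℝ) * (stirling1 m (j+1) : ℝ) * x ^ (j+1)) m,
        stirling1_eq_zero (show m < m + 1 by omega)]
      simp
      cases m with
      | zero => left; rfl
      | succ m => right; rfl
    rw [hB, ← Finset.sum_add_distrib]
    rw [Finset.sum_range_succ' (fun j => (stirling1 (m+1) j : ℝ) * x ^ j) (m+1)]
    have h0 : (stirling1 (m+1) 0 : ℝ) * x ^ 0 = 0 := by
      show ((0 : ℕ) : ℝ) * _ = 0; simp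
    rw [h0, add_zero]
    apply Finset.sum_congr rfl
    intro j _
    show _ = ((m * stirling1 m (j + 1) + stirling1 m j : ℕ) : ℝ) * _
    push_cast
    ring

lemma cast_descFactorial (n m : ℕ) :
    (n.descFactorial m : ℝ) = ∏ i ∈ Finset.range m, ((n : ℝ) - i) := by
  rcases le_or_gt m n with h | h
  · rw [Nat.descFactorial_eq_prod_range]
    rw [Nat.cast_prod]
    apply Finset.prod_congr rfl
    intro i hi
    rw [Finset.mem_range] at hi
    rw [Nat.cast_sub (by omega)]
  · rw [Nat.descFactorial_eq_zero_iff_lt.2 h]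
    have : ((n : ℝ) - (n : ℕ)) = 0 := by simp
    rw [eq_comm, Finset.prod_eq_zero (Finset.mem_range.2 h) this]
    simp

lemma cast_descFactorial_eq_sum (n m : ℕ) :
    (n.descFactorial m : ℝ) =
      (-1) ^ m * ∑ j ∈ Finset.range (m + 1), (stirling1 m j : ℝ) * (-(n : ℝ)) ^ j := by
  rw [← prod_eq_sum_stirling1, cast_descFactorial]
  calc ∏ i ∈ Finset.range m, ((n : ℝ) - i)
      = ∏ i ∈ Finset.range m, ((-1) * (-(n : ℝ) + i)) := by
        apply Finset.prod_congr rfl; intro i _; ring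
    _ = (∏ _i ∈ Finset.range m, (-1 : ℝ)) * ∏ i ∈ Finset.range m, (-(n : ℝ) + i) := by
        rw [Finset.prod_mul_distrib]
    _ = (-1) ^ m * ∏ i ∈ Finset.range m, (-(n : ℝ) + i) := by
        rw [Finset.prod_const]; simp

open Polynomial in

lemma key_sum (n : ℕ) (hn : 1 ≤ n) (i : Fin n) (m : ℕ) :
    ∑ k ∈ Finset.Nat.antidiagonalTuple n n,
        (Nat.multinomial Finset.univ k : ℝ) * ((k i).descFactorial m : ℝ)
      = (n.descFactorial m : ℝ) * (n : ℝ) ^ (n - m) := by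
  set f : Fin n → ℝ[X] := fun j => if j = i then Polynomial.X else 1 with hf
  have hsum : ∑ j, f j = Polynomial.X + Polynomial.C ((n : ℝ) - 1) := by
    rw [← Finset.add_sum_erase Finset.univ f (Finset.mem_univ i)]
    have h1 : f i = Polynomial.X := by simp [hf]
    have h2 : ∑ j ∈ Finset.univ.erase i, f j = ∑ _j ∈ Finset.univ.erase i, (1 : ℝ[X]) := by
      apply Finset.sum_congr rfl
      intro j hj
      simp [hf, (Finset.mem_erase.1 hj).1]
    rw [h1, h2, Finset.sum_const, Finset.card_erase_of_mem (Finset.mem_univ i)]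
    simp only [Finset.card_univ, Fintype.card_fin, smul_eq_mul, mul_one, nsmul_eq_mul]
    congr 1
    have hcast : ((n : ℝ) - 1) = ((n - 1 : ℕ) : ℝ) := by
      rw [Nat.cast_sub hn]; simp
    rw [hcast, Polynomial.C_eq_natCast]
  have hpoly : (Polynomial.X + Polynomial.C ((n : ℝ) - 1)) ^ n
      = ∑ k ∈ Finset.Nat.antidiagonalTuple n n,
          Polynomial.C (Nat.multinomial Finset.univ k : ℝ) * Polynomial.X ^ (k i) := by
    rw [← hsum, Finset.sum_pow_eq_sum_piAntidiag, Finset.piAntidiag_univ_fin_eq_antidiagonalTuple]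
    apply Finset.sum_congr rfl
    intro k _
    have hprod : ∏ j, f j ^ k j = Polynomial.X ^ (k i) := by
      rw [Finset.prod_eq_single_of_mem i (Finset.mem_univ i)]
      · simp [hf]
      · intro j _ hj
        simp [hf, hj]
    rw [hprod, Polynomial.C_eq_natCast]
  have := congrArg (fun p => Polynomial.eval 1 (Polynomial.derivative^[m] p)) hpoly
  rw [Polynomial.iterate_derivative_X_add_pow, Polynomial.iterate_derivative_sum] at this
  rw [Polynomial.eval_smul, Polynomial.eval_finset_sum] at this
  have hterm : ∀ k ∈ Finset.Nat.antidiagonalTuple n n,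
      Polynomial.eval 1 (Polynomial.derivative^[m]
        (Polynomial.C (Nat.multinomial Finset.univ k : ℝ) * Polynomial.X ^ (k i)))
      = (Nat.multinomial Finset.univ k : ℝ) * ((k i).descFactorial m : ℝ) := by
    intro k _
    rw [Polynomial.iterate_derivative_C_mul, Polynomial.iterate_derivative_X_pow_eq_C_mul]
    simp
  rw [Finset.sum_congr rfl hterm] at this
  rw [← this]
  simp

theorem multinomial_power_sum_diag (n q : ℕ) (hn : 1 ≤ n) (hq : 1 ≤ q) :
    ∑ k ∈ Finset.Nat.antidiagonalTuple n n,
        ((Nat.multinomial Finset.univ k : ℝ) * ∑ i, ((k i : ℝ)) ^ q) =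
      (n : ℝ) ^ ((n : ℤ) - ((q : ℤ) - 2)) *
        ∑ k ∈ Finset.range q, (-1 : ℝ) ^ k *
          (∑ j ∈ Finset.Icc 1 (q - k), (stirling2 q (k + j) : ℝ) * (stirling1 (k + j) j : ℝ)) *
          (n : ℝ) ^ (q - k - 1) := by
  have hn0 : (n : ℝ) ≠ 0 := Nat.cast_ne_zero.2 (by omega)
  set F : ℕ → ℕ → ℝ := fun m j =>
    (stirling2 q m : ℝ) * (stirling1 m j : ℝ) * ((-1) ^ m * (-1) ^ j) *
      (n : ℝ) ^ ((n : ℤ) + 1 - m + j) with hF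
  set G : ℕ → ℕ → ℝ := fun k j =>
    (-1 : ℝ) ^ k * (stirling2 q (k + j) : ℝ) * (stirling1 (k + j) j : ℝ) *
      (n : ℝ) ^ ((n : ℤ) + 1 - k) with hG
  -- Step 1 : LHS as single sum over m
  have inner : ∀ i : Fin n, ∑ k ∈ Finset.Nat.antidiagonalTuple n n,
      (Nat.multinomial Finset.univ k : ℝ) * ((k i : ℝ)) ^ q
      = ∑ m ∈ Finset.range (q + 1),
          (stirling2 q m : ℝ) * ((n.descFactorial m : ℝ) * (n : ℝ) ^ (n - m)) := by
    intro i
    calc ∑ k ∈ Finset.Nat.antidiagonalTuple n n,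
          (Nat.multinomial Finset.univ k : ℝ) * ((k i : ℝ)) ^ q
        = ∑ k ∈ Finset.Nat.antidiagonalTuple n n, ∑ m ∈ Finset.range (q + 1),
            (stirling2 q m : ℝ) *
              ((Nat.multinomial Finset.univ k : ℝ) * ((k i).descFactorial m : ℝ)) := by
          apply Finset.sum_congr rfl
          intro k _
          rw [pow_eq_sum_stirling2 (k i) q, Finset.mul_sum]
          apply Finset.sum_congr rfl
          intro m _
          ring
      _ = ∑ m ∈ Finset.range (q + 1), (stirling2 q m : ℝ) *
            ∑ k ∈ Finset.Nat.antidiagonalTuple n n,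
              (Nat.multinomial Finset.univ k : ℝ) * ((k i).descFactorial m : ℝ) := by
          rw [Finset.sum_comm]
          apply Finset.sum_congr rfl
          intro m _
          rw [Finset.mul_sum]
      _ = _ := by
          apply Finset.sum_congr rfl
          intro m _
          rw [key_sum n hn i m]
  have step1 : ∑ k ∈ Finset.Nat.antidiagonalTuple n n,
      ((Nat.multinomial Finset.univ k : ℝ) * ∑ i, ((k i : ℝ)) ^ q)
      = (n : ℝ) * ∑ m ∈ Finset.range (q + 1),
          (stirling2 q m : ℝ) * ((n.descFactorial m : ℝ) * (n : ℝ) ^ (n - m)) := by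
    calc ∑ k ∈ Finset.Nat.antidiagonalTuple n n,
          ((Nat.multinomial Finset.univ k : ℝ) * ∑ i, ((k i : ℝ)) ^ q)
        = ∑ k ∈ Finset.Nat.antidiagonalTuple n n, ∑ i,
            (Nat.multinomial Finset.univ k : ℝ) * ((k i : ℝ)) ^ q := by
          apply Finset.sum_congr rfl; intro k _; rw [Finset.mul_sum]
      _ = ∑ i, ∑ k ∈ Finset.Nat.antidiagonalTuple n n,
            (Nat.multinomial Finset.univ k : ℝ) * ((k i : ℝ)) ^ q := Finset.sum_comm
      _ = ∑ _i : Fin n, ∑ m ∈ Finset.range (q + 1),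
            (stirling2 q m : ℝ) * ((n.descFactorial m : ℝ) * (n : ℝ) ^ (n - m)) :=
          Finset.sum_congr rfl (fun i _ => inner i)
      _ = _ := by
          rw [Finset.sum_const, Finset.card_univ, Fintype.card_fin, nsmul_eq_mul]
  -- Step 2 : termwise conversion to double sum F
  have hterm : ∀ m ∈ Finset.range (q + 1),
      (n : ℝ) * ((stirling2 q m : ℝ) * ((n.descFactorial m : ℝ) * (n : ℝ) ^ (n - m)))
        = ∑ j ∈ Finset.range (m + 1), F m j := by
    intro m _
    have hfac : ∑ j ∈ Finset.range (m + 1), F m j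
        = (stirling2 q m : ℝ) * (n : ℝ) ^ ((n : ℤ) + 1 - m) * (n.descFactorial m : ℝ) := by
      rw [cast_descFactorial_eq_sum n m, Finset.mul_sum, Finset.mul_sum]
      apply Finset.sum_congr rfl
      intro j _
      have hz : (n : ℝ) ^ ((n : ℤ) + 1 - m + j) =
          (n : ℝ) ^ ((n : ℤ) + 1 - m) * (n : ℝ) ^ (j : ℤ) := by
        rw [← zpow_add₀ hn0]
      have hnj : (-(n : ℝ)) ^ j = (-1) ^ j * (n : ℝ) ^ (j : ℤ) := by
        rw [zpow_natCast, neg_pow]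
      rw [hF]
      simp only
      rw [hz, hnj]
      ring
    rw [hfac]
    rcases le_or_gt m n with hmn | hmn
    · have : (n : ℝ) ^ ((n : ℤ) + 1 - m) = (n : ℝ) * (n : ℝ) ^ (n - m) := by
        rw [show ((n : ℤ) + 1 - m) = 1 + ((n - m : ℕ) : ℤ) by push_cast [hmn]; ring,
          zpow_add₀ hn0, zpow_one, zpow_natCast]
      rw [this]; ring
    · rw [Nat.descFactorial_eq_zero_iff_lt.2 hmn]
      push_cast; ring
  -- Step 3 : drop j = 0 terms
  have hdrop : ∀ m ∈ Finset.range (q + 1),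
      ∑ j ∈ Finset.range (m + 1), F m j = ∑ j ∈ Finset.Icc 1 m, F m j := by
    intro m _
    rw [eq_comm]
    apply Finset.sum_subset
    · intro j hj
      rw [Finset.mem_Icc] at hj
      rw [Finset.mem_range]; omega
    · intro j hj hj'
      rw [Finset.mem_range] at hj
      rw [Finset.mem_Icc] at hj'
      have hj0 : j = 0 := by omega
      subst hj0
      rcases m with _ | m
      · have : stirling2 q 0 = 0 := by
          obtain ⟨q', rfl⟩ := Nat.exists_eq_succ_of_ne_zero (by omega : q ≠ 0)
          exact stirling2_zero q'
        rw [hF]; simp [this]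
      · have : stirling1 (m + 1) 0 = 0 := stirling1_zero m
        rw [hF]; simp [this]
  -- Step 4 : reindex
  have hreindex : ∑ m ∈ Finset.range (q + 1), ∑ j ∈ Finset.Icc 1 m, F m j
      = ∑ k ∈ Finset.range q, ∑ j ∈ Finset.Icc 1 (q - k), G k j := by
    rw [Finset.sum_sigma', Finset.sum_sigma']
    apply Finset.sum_nbij' (fun p => (⟨p.1 - p.2, p.2⟩ : Σ _ : ℕ, ℕ))
      (fun p => (⟨p.1 + p.2, p.2⟩ : Σ _ : ℕ, ℕ))
    · intro p hp
      simp only [Finset.mem_sigma, Finset.mem_range, Finset.mem_Icc] at hp ⊢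
      omega
    · intro p hp
      simp only [Finset.mem_sigma, Finset.mem_range, Finset.mem_Icc] at hp ⊢
      omega
    · rintro ⟨m, j⟩ hp
      simp only [Finset.mem_sigma, Finset.mem_range, Finset.mem_Icc] at hp
      have h : m - j + j = m := by omega
      simp [h]
    · rintro ⟨k, j⟩ hp
      simp only [Finset.mem_sigma, Finset.mem_range, Finset.mem_Icc] at hp
      have h : k + j - j = k := by omega
      simp [h]
    · rintro ⟨m, j⟩ hp
      simp only [Finset.mem_sigma, Finset.mem_range, Finset.mem_Icc] at hp
      obtain ⟨hm, hj1, hj2⟩ := hp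
      simp only [hF, hG]
      have hadd : m - j + j = m := by omega
      rw [hadd]
      have hsign : (-1 : ℝ) ^ m * (-1 : ℝ) ^ j = (-1 : ℝ) ^ (m - j) := by
        have : (-1 : ℝ) ^ m = (-1 : ℝ) ^ (m - j) * (-1 : ℝ) ^ j := by
          rw [← pow_add]; congr 1; omega
        rw [this, mul_assoc, ← pow_add]
        have : (-1 : ℝ) ^ (j + j) = 1 := by
          rw [pow_add, ← pow_add]
          exact Even.neg_one_pow ⟨j, rfl⟩
        rw [this, mul_one]
      have hexp : ((n : ℤ) + 1 - m + j) = ((n : ℤ) + 1 - (m - j : ℕ)) := by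
        push_cast [Nat.cast_sub hj2]; ring
      rw [hexp, ← hsign]
      ring
  -- Step 5 : RHS as double sum G
  have hrhs : (n : ℝ) ^ ((n : ℤ) - ((q : ℤ) - 2)) *
        ∑ k ∈ Finset.range q, (-1 : ℝ) ^ k *
          (∑ j ∈ Finset.Icc 1 (q - k), (stirling2 q (k + j) : ℝ) * (stirling1 (k + j) j : ℝ)) *
          (n : ℝ) ^ (q - k - 1)
      = ∑ k ∈ Finset.range q, ∑ j ∈ Finset.Icc 1 (q - k), G k j := by
    rw [Finset.mul_sum]
    apply Finset.sum_congr rfl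
    intro k hk
    rw [Finset.mem_range] at hk
    have hpow : (n : ℝ) ^ ((n : ℤ) - ((q : ℤ) - 2)) * (n : ℝ) ^ (q - k - 1)
        = (n : ℝ) ^ ((n : ℤ) + 1 - k) := by
      rw [show ((n : ℝ) ^ (q - k - 1 : ℕ)) = (n : ℝ) ^ ((q - k - 1 : ℕ) : ℤ) by
          rw [zpow_natCast],
        ← zpow_add₀ hn0]
      congr 1
      omega
    rw [Finset.mul_sum, Finset.sum_mul, Finset.mul_sum]
    apply Finset.sum_congr rfl
    intro j _
    simp only [hG]
    rw [← hpow]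
    ring
  -- Assemble
  rw [step1, hrhs, ← hreindex, Finset.mul_sum, ← Finset.sum_congr rfl hdrop,
    ← Finset.sum_congr rfl hterm]
end
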